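/- Let M and N be complex Hilbert spaces and H = M ⊕ N. Let T be a bounded self-adjoint operator on M with 0 ≤ T ≤ I_M, Γ : M → N a bounded operator, and X a bounded self-adjoint operator on N. Let K_X be the bounded operator on H with block matrix [[T, Γ*],[Γ, X]]. Then K_X is a non-negative contraction (0 ≤ K_X ≤ I_H) if and only if for every ε > 0 both of the following hold: Γ (T + εI_M)^{-1} Γ* ≤ X + εI_N, and Γ ((1+ε)I_M − T)^{-1} Γ* ≤ (1+ε)I_N − X. -/

import Mathlib

/-!
Completing the square: if `A` is positive and invertible and `w = A⁻¹ Γ* v`, the quadratic form of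
`[[A, Γ*],[Γ, Y]]` at `(u, v)` is `⟪A (u + w), u + w⟫ + ⟪(Y - Γ A⁻¹ Γ*) v, v⟫`, so the block
operator is positive iff its Schur complement `Y - Γ A⁻¹ Γ*` is. As the positive cone is closed,
`K ≥ 0` iff `K + ε ≥ 0` for every `ε > 0`, and `K + ε` is the block operator of `T + ε`, `Γ`,
`X + ε`; this gives the first condition. The second is the first one for
`I - K = [[I - T, -Γ*],[-Γ, I - X]]`.
-/

open ContinuousLinearMap

/-- The block operator `[[T, Γ*],[Γ, X]]` on `H = M ⊕₂ N`, sending `(u, v)` to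
`(Tu + Γ*v, Γu + Xv)`. -/
noncomputable def blockOp
    {M N : Type*} [NormedAddCommGroup M] [InnerProductSpace ℂ M] [CompleteSpace M]
    [NormedAddCommGroup N] [InnerProductSpace ℂ N] [CompleteSpace N]
    (T : M →L[ℂ] M) (Γ : M →L[ℂ] N) (X : N →L[ℂ] N) :
    WithLp 2 (M × N) →L[ℂ] WithLp 2 (M × N) :=
  ((WithLp.prodContinuousLinearEquiv 2 ℂ M N).symm :
      M × N →L[ℂ] WithLp 2 (M × N)).comp <|
    (((T.comp (ContinuousLinearMap.fst ℂ M N) +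
        (ContinuousLinearMap.adjoint Γ).comp (ContinuousLinearMap.snd ℂ M N)).prod
      (Γ.comp (ContinuousLinearMap.fst ℂ M N) +
        X.comp (ContinuousLinearMap.snd ℂ M N)))).comp
      (WithLp.prodContinuousLinearEquiv 2 ℂ M N : WithLp 2 (M × N) →L[ℂ] M × N)

open RCLike Filter Topology
open scoped InnerProductSpace ComplexOrder

lemma one_add_smul_one_sub {A : Type*} [Ring A] [Module ℂ A] (c : ℂ) (a : A) :
    (1 + c) • (1 : A) - a = (1 - a) + c • 1 := by
  rw [add_smul, one_smul]
  abel

lemma ContinuousLinearMap.IsPositive.isUnit_add_smul_one {E : Type*} [NormedAddCommGroup E]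
    [InnerProductSpace ℂ E] [CompleteSpace E] {T : E →L[ℂ] E} (hT : T.IsPositive) {ε : ℝ}
    (hε : 0 < ε) :
    IsUnit (T + (ε : ℂ) • 1) :=
  ((isStrictlyPositive_one.smul (by exact_mod_cast hε)).nonneg_add
    ((nonneg_iff_isPositive T).mpr hT)).isUnit

lemma isPositive_iff_forall_isPositive_add_smul_one {E : Type*} [NormedAddCommGroup E]
    [InnerProductSpace ℂ E] [CompleteSpace E] (S : E →L[ℂ] E) :
    S.IsPositive ↔ ∀ ε : ℝ, 0 < ε → (S + (ε : ℂ) • 1).IsPositive := by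
  have hlim : Tendsto (fun ε : ℝ => S + (ε : ℂ) • 1) (𝓝[>] 0) (𝓝 S) := by
    have : Continuous fun ε : ℝ => S + (ε : ℂ) • (1 : E →L[ℂ] E) := by fun_prop
    simpa using (this.tendsto 0).mono_left nhdsWithin_le_nhds
  simp only [← nonneg_iff_isPositive]
  exact ⟨fun hS ε hε => add_nonneg hS (smul_nonneg (by exact_mod_cast hε.le) zero_le_one),
    fun h => ge_of_tendsto hlim (eventually_nhdsWithin_of_forall h)⟩

section BlockOperator

variable {M N : Type*} [NormedAddCommGroup M] [InnerProductSpace ℂ M] [CompleteSpace M]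
    [NormedAddCommGroup N] [InnerProductSpace ℂ N] [CompleteSpace N]
    (T : M →L[ℂ] M) (Γ : M →L[ℂ] N) (X : N →L[ℂ] N)

@[simp]
lemma blockOp_apply_fst (x : WithLp 2 (M × N)) :
    (blockOp T Γ X x).fst = T x.fst + adjoint Γ x.snd :=
  rfl

@[simp]
lemma blockOp_apply_snd (x : WithLp 2 (M × N)) : (blockOp T Γ X x).snd = Γ x.fst + X x.snd :=
  rfl

lemma adjoint_blockOp : adjoint (blockOp T Γ X) = blockOp (adjoint T) Γ (adjoint X) := by
  refine ((eq_adjoint_iff _ _).mpr fun x y => ?_).symm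
  simp only [WithLp.prod_inner_apply, WithLp.ofLp_fst, WithLp.ofLp_snd, blockOp_apply_fst,
    blockOp_apply_snd, inner_add_left, inner_add_right, adjoint_inner_left, adjoint_inner_right]
  ring

lemma re_inner_blockOp_apply_self (x : WithLp 2 (M × N)) :
    re ⟪blockOp T Γ X x, x⟫_ℂ =
      re ⟪T x.fst, x.fst⟫_ℂ + 2 * re ⟪Γ x.fst, x.snd⟫_ℂ + re ⟪X x.snd, x.snd⟫_ℂ := by
  simp only [WithLp.prod_inner_apply, WithLp.ofLp_fst, WithLp.ofLp_snd, blockOp_apply_fst,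
    blockOp_apply_snd, inner_add_left, adjoint_inner_left, map_add]
  rw [inner_re_symm x.snd]
  ring

lemma one_sub_blockOp : 1 - blockOp T Γ X = blockOp (1 - T) (-Γ) (1 - X) := by
  ext x : 1
  refine WithLp.ofLp_injective 2 (Prod.ext ?_ ?_) <;> (simp; abel)

lemma blockOp_add_smul_one (c : ℂ) :
    blockOp T Γ X + c • 1 = blockOp (T + c • 1) Γ (X + c • 1) := by
  ext x : 1
  refine WithLp.ofLp_injective 2 (Prod.ext ?_ ?_) <;> (simp; abel)

lemma re_inner_blockOp_apply_self_eq_schur {A : M →L[ℂ] M} (hA : IsSelfAdjoint A)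
    (hAu : IsUnit A) (Γ : M →L[ℂ] N) (Y : N →L[ℂ] N) (x : WithLp 2 (M × N)) :
    let w := Ring.inverse A (adjoint Γ x.snd)
    re ⟪blockOp A Γ Y x, x⟫_ℂ = re ⟪A (x.fst + w), x.fst + w⟫_ℂ +
      re ⟪(Y - Γ ∘L Ring.inverse A ∘L adjoint Γ) x.snd, x.snd⟫_ℂ := by
  intro w
  have hAw : A w = adjoint Γ x.snd := by
    change (A * Ring.inverse A) _ = _
    rw [Ring.mul_inverse_cancel A hAu, one_apply_eq_self]
  have hcross₁ : re ⟪A x.fst, w⟫_ℂ = re ⟪Γ x.fst, x.snd⟫_ℂ := by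
    rw [← coe_coe, hA.isSymmetric, coe_coe, hAw, adjoint_inner_right]
  have hcross₂ : re ⟪A w, x.fst⟫_ℂ = re ⟪Γ x.fst, x.snd⟫_ℂ := by
    rw [hAw, adjoint_inner_left, inner_re_symm]
  have hdiag : re ⟪A w, w⟫_ℂ = re ⟪(Γ ∘L Ring.inverse A ∘L adjoint Γ) x.snd, x.snd⟫_ℂ := by
    rw [hAw, adjoint_inner_left, inner_re_symm]; rfl
  rw [re_inner_blockOp_apply_self, sub_apply, inner_sub_left, map_sub, map_add, inner_add_left,
    inner_add_right, inner_add_right, map_add, map_add, map_add, hcross₁, hcross₂, hdiag]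
  ring

lemma IsSelfAdjoint.blockOp {T : M →L[ℂ] M} (hT : IsSelfAdjoint T) (Γ : M →L[ℂ] N)
    {X : N →L[ℂ] N} (hX : IsSelfAdjoint X) : IsSelfAdjoint (blockOp T Γ X) := by
  rw [isSelfAdjoint_iff', adjoint_blockOp, hT.adjoint_eq, hX.adjoint_eq]

lemma isPositive_blockOp_iff_isPositive_schur {A : M →L[ℂ] M} (hA : A.IsPositive)
    (hAu : IsUnit A) (Γ : M →L[ℂ] N) {Y : N →L[ℂ] N} (hY : IsSelfAdjoint Y) :
    (blockOp A Γ Y).IsPositive ↔ (Y - Γ ∘L Ring.inverse A ∘L adjoint Γ).IsPositive := by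
  have hS : IsSelfAdjoint (Y - Γ ∘L Ring.inverse A ∘L adjoint Γ) :=
    hY.sub (hA.isSelfAdjoint.ringInverse.conj_adjoint Γ)
  simp only [isPositive_def', reApplyInnerSelf_apply, hS, hA.isSelfAdjoint.blockOp Γ hY,
    true_and, re_inner_blockOp_apply_self_eq_schur hA.isSelfAdjoint hAu]
  refine ⟨fun h v => ?_, fun h x => add_nonneg (hA.re_inner_nonneg_left _) (h _)⟩
  simpa [inner_sub_left] using h (WithLp.toLp 2 (-Ring.inverse A (adjoint Γ v), v))

lemma isPositive_blockOp_iff_forall_isPositive_schur {T : M →L[ℂ] M} (hT : T.IsPositive)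
    (Γ : M →L[ℂ] N) {X : N →L[ℂ] N} (hX : IsSelfAdjoint X) :
    (blockOp T Γ X).IsPositive ↔ ∀ ε : ℝ, 0 < ε →
      (X + (ε : ℂ) • 1 - Γ ∘L Ring.inverse (T + (ε : ℂ) • 1) ∘L adjoint Γ).IsPositive := by
  rw [isPositive_iff_forall_isPositive_add_smul_one]
  refine forall₂_congr fun ε hε => ?_
  have hε' : (0 : ℂ) ≤ ε := by exact_mod_cast hε.le
  rw [blockOp_add_smul_one]
  exact isPositive_blockOp_iff_isPositive_schur (hT.add (isPositive_one.smul_of_nonneg hε'))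
    (hT.isUnit_add_smul_one hε) Γ (hX.add (isPositive_one.smul_of_nonneg hε').isSelfAdjoint)

end BlockOperator

theorem stmt_6
    {M N : Type*} [NormedAddCommGroup M] [InnerProductSpace ℂ M] [CompleteSpace M]
    [NormedAddCommGroup N] [InnerProductSpace ℂ N] [CompleteSpace N]
    (T : M →L[ℂ] M) (hT : T.IsPositive) (hT1 : ((1 : M →L[ℂ] M) - T).IsPositive)
    (Γ : M →L[ℂ] N) (X : N →L[ℂ] N) (hX : IsSelfAdjoint X) :
    ((blockOp T Γ X).IsPositive ∧
        ((1 : WithLp 2 (M × N) →L[ℂ] WithLp 2 (M × N)) - blockOp T Γ X).IsPositive) ↔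
      ∀ ε : ℝ, 0 < ε →
        (X + (ε : ℂ) • (1 : N →L[ℂ] N) -
          Γ.comp ((Ring.inverse (T + (ε : ℂ) • (1 : M →L[ℂ] M))).comp
            (ContinuousLinearMap.adjoint Γ))).IsPositive ∧
        ((1 + ε : ℂ) • (1 : N →L[ℂ] N) - X -
          Γ.comp ((Ring.inverse ((1 + ε : ℂ) • (1 : M →L[ℂ] M) - T)).comp
            (ContinuousLinearMap.adjoint Γ))).IsPositive := by
  rw [one_sub_blockOp, isPositive_blockOp_iff_forall_isPositive_schur hT Γ hX,
    isPositive_blockOp_iff_forall_isPositive_schur hT1 (-Γ) ((IsSelfAdjoint.one _).sub hX),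
    ← forall₂_and]
  refine forall₂_congr fun ε _ => and_congr_right' ?_
  simp only [one_add_smul_one_sub, map_neg, comp_neg, neg_comp, neg_neg]
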